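/- For every ω ∈ Ω and every n, the subgroup L_{n,ω} is contained in the level stabilizer St_{L_ω}(n), i.e., every element of L_{n,ω} fixes every word of length n. -/

import Mathlib

/-!  Common setup: the group `Aut(X*)` of automorphisms of the rooted binary tree,
the Grigorchuk generators `a, b_ω, c_ω, d_ω`, and the subgroups `G_ω`, `L_ω`. -/

/-- Finite words over `X = {0,1}`: vertices of the rooted binary tree. -/
abbrev Word := List Bool

/-- `Aut(X*)`: bijections of the set of words which preserve word length
(hence fix the empty word) and preserve the prefix relation, as a subgroup of the
permutation group of `Word`. -/
def TreeAut : Subgroup (Equiv.Perm Word) where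
  carrier := {g | (∀ w : Word, (g w).length = w.length) ∧
      ∀ u v : Word, u <+: v ↔ g u <+: g v}
  one_mem' := ⟨fun _ => rfl, fun _ _ => Iff.rfl⟩
  mul_mem' := by
    rintro g h ⟨hg1, hg2⟩ ⟨hh1, hh2⟩
    refine ⟨fun w => ?_, fun u v => ?_⟩
    · simpa using (hg1 (h w)).trans (hh1 w)
    · simpa using (hh2 u v).trans (hg2 (h u) (h v))
  inv_mem' := by
    rintro g ⟨hg1, hg2⟩
    refine ⟨fun w => ?_, fun u v => ?_⟩
    · have := hg1 (g⁻¹ w)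
      rw [← Equiv.Perm.mul_apply, mul_inv_cancel, Equiv.Perm.one_apply] at this
      exact this.symm
    · have := (hg2 (g⁻¹ u) (g⁻¹ v)).symm
      simpa using this

/-- Application of a tree automorphism to a word. -/
def ap (g : ↥TreeAut) (w : Word) : Word := (g : Equiv.Perm Word) w

/-- The root permutation `a` (as a map): `a(0v) = 1v`, `a(1v) = 0v`. -/
def aFun : Word → Word
  | [] => []
  | x :: v => (!x) :: v

/-- The common recursive pattern of the maps `b_ω, c_ω, d_ω`: on `0v` act by the
identity if `ω 0 = k` and by `a` otherwise, on `1v` recurse with the shifted sequence.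
(`k = 2` gives `b`, `k = 1` gives `c`, `k = 0` gives `d`.) -/
def genFun (k : Fin 3) : (ℕ → Fin 3) → Word → Word
  | _, [] => []
  | ω, false :: v => false :: (if ω 0 = k then v else aFun v)
  | ω, true :: v => true :: genFun k (fun n => ω (n + 1)) v

lemma aFun_invol : Function.Involutive aFun := by
  intro w; cases w with
  | nil => rfl
  | cons x v => simp [aFun]

lemma aFun_length : ∀ w : Word, (aFun w).length = w.length := by
  intro w; cases w <;> simp [aFun]

lemma aFun_prefix : ∀ u v : Word, u <+: v → aFun u <+: aFun v := by
  intro u v h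
  cases u with
  | nil => simp [aFun]
  | cons x u' =>
    cases v with
    | nil => simp at h
    | cons y v' =>
      rw [List.cons_prefix_cons] at h
      obtain ⟨rfl, h2⟩ := h
      simpa [aFun, List.cons_prefix_cons] using h2

lemma genFun_length (k : Fin 3) : ∀ (w : Word) (ω : ℕ → Fin 3),
    (genFun k ω w).length = w.length
  | [], _ => rfl
  | false :: v, ω => by
    by_cases h : ω 0 = k <;> simp [genFun, h, aFun_length]
  | true :: v, ω => by
    simp [genFun, genFun_length k v]

lemma genFun_invol (k : Fin 3) : ∀ (w : Word) (ω : ℕ → Fin 3),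
    genFun k ω (genFun k ω w) = w
  | [], _ => rfl
  | false :: v, ω => by
    by_cases h : ω 0 = k <;> simp [genFun, h, aFun_invol v]
  | true :: v, ω => by
    simp [genFun, genFun_invol k v]

lemma genFun_prefix (k : Fin 3) : ∀ (u v : Word) (ω : ℕ → Fin 3),
    u <+: v → genFun k ω u <+: genFun k ω v
  | [], v, ω, _ => by simp [genFun]
  | x :: u', [], ω, h => by simp at h
  | x :: u', y :: v', ω, h => by
    rw [List.cons_prefix_cons] at h
    obtain ⟨rfl, h2⟩ := h
    cases x with
    | false =>
      by_cases h0 : ω 0 = k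
      · simpa [genFun, h0, List.cons_prefix_cons] using h2
      · simpa [genFun, h0, List.cons_prefix_cons] using aFun_prefix u' v' h2
    | true =>
      simpa [genFun, List.cons_prefix_cons] using genFun_prefix k u' v' _ h2

/-- Build an element of `Aut(X*)` from an involutive, length-preserving,
prefix-preserving map. -/
def mkAut (f : Word → Word) (hinv : Function.Involutive f)
    (hlen : ∀ w, (f w).length = w.length)
    (hpre : ∀ u v : Word, u <+: v → f u <+: f v) : ↥TreeAut :=
  ⟨hinv.toPerm, by
    refine ⟨fun w => ?_, fun u v => ⟨fun h => ?_, fun h => ?_⟩⟩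
    · simpa using hlen w
    · simpa using hpre u v h
    · have := hpre _ _ (by simpa using h)
      simpa [hinv u, hinv v] using this⟩

/-- The automorphism `a`. -/
def aAut : ↥TreeAut := mkAut aFun aFun_invol aFun_length aFun_prefix

/-- The automorphism `b_ω`. -/
def bAut (ω : ℕ → Fin 3) : ↥TreeAut :=
  mkAut (genFun 2 ω) (fun w => genFun_invol 2 w ω) (fun w => genFun_length 2 w ω)
    (fun u v h => genFun_prefix 2 u v ω h)

/-- The automorphism `c_ω`. -/
def cAut (ω : ℕ → Fin 3) : ↥TreeAut :=
  mkAut (genFun 1 ω) (fun w => genFun_invol 1 w ω) (fun w => genFun_length 1 w ω)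
    (fun u v h => genFun_prefix 1 u v ω h)

/-- The automorphism `d_ω`. -/
def dAut (ω : ℕ → Fin 3) : ↥TreeAut :=
  mkAut (genFun 0 ω) (fun w => genFun_invol 0 w ω) (fun w => genFun_length 0 w ω)
    (fun u v h => genFun_prefix 0 u v ω h)

/-- `G_ω = ⟨a, b_ω, c_ω, d_ω⟩`. -/
def Ggrp (ω : ℕ → Fin 3) : Subgroup ↥TreeAut :=
  Subgroup.closure {aAut, bAut ω, cAut ω, dAut ω}

/-- `L_ω = ⟨a b_ω, d_ω⟩`. -/
def Lgrp (ω : ℕ → Fin 3) : Subgroup ↥TreeAut :=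
  Subgroup.closure {aAut * bAut ω, dAut ω}

/-- The `n`-fold shift `σⁿω`. -/
def shift (n : ℕ) (ω : ℕ → Fin 3) : ℕ → Fin 3 := fun m => ω (m + n)

/-- `Ω_∞`: sequences in which each of `0, 1, 2` occurs infinitely often. -/
def OmegaInf : Set (ℕ → Fin 3) := {ω | ∀ k : Fin 3, ∀ N : ℕ, ∃ n, N ≤ n ∧ ω n = k}

/-- `g` fixes every word of length `n`. -/
def fixesLevel (g : ↥TreeAut) (n : ℕ) : Prop := ∀ w : Word, w.length = n → ap g w = w

/-- The subgroup of all tree automorphisms acting trivially outside the subtree `uX*`. -/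
def ristSubgroup (u : Word) : Subgroup ↥TreeAut where
  carrier := {g | ∀ w : Word, ¬ u <+: w → ap g w = w}
  one_mem' := by intro w _; rfl
  mul_mem' := by
    intro g h hg hh w hw
    have e1 : ap g w = w := hg w hw
    have e2 : ap h w = w := hh w hw
    simp only [ap] at e1 e2
    show (g : Equiv.Perm Word) ((h : Equiv.Perm Word) w) = w
    rw [e2, e1]
  inv_mem' := by
    intro g hg w hw
    have h1' : ap g w = w := hg w hw
    have h1 : (g : Equiv.Perm Word) w = w := h1'
    show ((g : Equiv.Perm Word))⁻¹ w = w
    conv_lhs => rw [← h1]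
    simp

/-- The subgroup of all tree automorphisms fixing every word of length `n`
(the `n`-th level stabilizer in `Aut(X*)`). -/
def levelStab (n : ℕ) : Subgroup ↥TreeAut where
  carrier := {g | fixesLevel g n}
  one_mem' := by intro w _; rfl
  mul_mem' := by
    intro g h hg hh w hw
    have e1 : ap g w = w := hg w hw
    have e2 : ap h w = w := hh w hw
    simp only [ap] at e1 e2
    show (g : Equiv.Perm Word) ((h : Equiv.Perm Word) w) = w
    rw [e2, e1]
  inv_mem' := by
    intro g hg w hw
    have h1' : ap g w = w := hg w hw
    have h1 : (g : Equiv.Perm Word) w = w := h1'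
    show ((g : Equiv.Perm Word))⁻¹ w = w
    conv_lhs => rw [← h1]
    simp

/-- The rigid level stabilizer `Rist_G(n)`: the subgroup generated by the rigid vertex
stabilizers `Rist_G(u) = G ⊓ ristSubgroup u` over all words `u` of length `n`. -/
def ristLevel (G : Subgroup ↥TreeAut) (n : ℕ) : Subgroup ↥TreeAut :=
  ⨆ u ∈ {u : Word | u.length = n}, G ⊓ ristSubgroup u

/-- `G` acts transitively on each level of the tree. -/
def LevelTransitive (G : Subgroup ↥TreeAut) : Prop :=
  ∀ u v : Word, u.length = v.length → ∃ g ∈ G, ap g u = v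

/-- A set of tree automorphisms acts level transitively on the subtree `vX*`. -/
def LevelTransitiveOn (S : Set ↥TreeAut) (v : Word) : Prop :=
  ∀ u₁ u₂ : Word, u₁.length = u₂.length → ∃ g ∈ S, ap g (v ++ u₁) = v ++ u₂

/-- `L_{n,ω}`: `L_{0,ω} = L_ω` and `L_{n,ω}` is generated by the squares of
elements of `L_{n-1,ω}`. -/
def Lsq (ω : ℕ → Fin 3) : ℕ → Subgroup ↥TreeAut
  | 0 => Lgrp ω
  | n + 1 => Subgroup.closure {x | ∃ y ∈ Lsq ω n, x = y * y}

/-- `g` is active at the word `v`: the section `g_v` acts nontrivially on the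
one-letter words. -/
def IsActive (g : ↥TreeAut) (v : Word) : Prop :=
  ap g (v ++ [false]) ≠ ap g v ++ [false]

open scoped Classical in
/-- `p(g)_n`: the number of words of length `n` at which `g` is active, mod 2
(words of length `n` are enumerated as `List.ofFn f` for `f : Fin n → Bool`). -/
noncomputable def pMap (g : ↥TreeAut) (n : ℕ) : ZMod 2 :=
  (((Finset.univ : Finset (Fin n → Bool)).filter
    (fun f => IsActive g (List.ofFn f))).card : ZMod 2)

/-! A tree automorphism fixing a vertex `u` permutes its two children `u0, u1`, and every
permutation of a two-element set squares to the identity. Hence squares of elements of the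
level-`n` stabilizer fix level `n + 1`, and the claim follows by induction on `n`. -/

lemma ap_mul (g h : ↥TreeAut) (w : Word) : ap (g * h) w = ap g (ap h w) := rfl

lemma ap_injective (g : ↥TreeAut) : Function.Injective (ap g) :=
  (g : Equiv.Perm Word).injective

lemma length_ap (g : ↥TreeAut) (w : Word) : (ap g w).length = w.length :=
  g.2.1 w

lemma ap_prefix_ap {g : ↥TreeAut} {u v : Word} (h : u <+: v) : ap g u <+: ap g v :=
  (g.2.2 u v).mp h

lemma exists_ap_append_singleton {g : ↥TreeAut} {u : Word} (hu : ap g u = u) (x : Bool) :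
    ∃ y : Bool, ap g (u ++ [x]) = u ++ [y] := by
  have hpre := ap_prefix_ap (g := g) (List.prefix_append u [x])
  rw [hu] at hpre
  obtain ⟨t, ht⟩ := hpre
  have hlen : t.length = 1 := by
    simpa [← ht] using length_ap g (u ++ [x])
  obtain ⟨y, rfl⟩ := List.length_eq_one_iff.mp hlen
  exact ⟨y, ht.symm⟩

lemma Bool.involutive_of_injective {f : Bool → Bool} (hf : Function.Injective f) :
    Function.Involutive f := by
  intro x
  cases h0 : f false <;> cases h1 : f true <;> cases x <;> simp_all

lemma ap_mul_self_append_singleton {g : ↥TreeAut} {u : Word} (hu : ap g u = u) (x : Bool) :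
    ap (g * g) (u ++ [x]) = u ++ [x] := by
  choose f hf using exists_ap_append_singleton hu
  have hf_inj : Function.Injective f := fun x y hxy => by
    simpa using ap_injective g (by rw [hf x, hf y, hxy] : ap g (u ++ [x]) = ap g (u ++ [y]))
  rw [ap_mul, hf, hf, Bool.involutive_of_injective hf_inj x]

lemma levelStab_zero : levelStab 0 = ⊤ := by
  refine eq_top_iff.mpr fun g _ w hw => ?_
  rw [List.length_eq_zero_iff.mp hw]
  exact List.length_eq_zero_iff.mp (length_ap g [])

lemma mul_self_mem_levelStab_succ {g : ↥TreeAut} {n : ℕ} (hg : g ∈ levelStab n) :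
    g * g ∈ levelStab (n + 1) := by
  intro w hw
  rcases List.eq_nil_or_concat w with rfl | ⟨u, x, rfl⟩
  · simp at hw
  rw [List.concat_eq_append] at hw ⊢
  exact ap_mul_self_append_singleton (hg u (by simpa using hw)) x

lemma closure_squares_le_levelStab_succ {H : Subgroup ↥TreeAut} {n : ℕ}
    (hH : H ≤ levelStab n) :
    Subgroup.closure {x | ∃ y ∈ H, x = y * y} ≤ levelStab (n + 1) := by
  rw [Subgroup.closure_le]
  rintro x ⟨y, hy, rfl⟩
  exact mul_self_mem_levelStab_succ (hH hy)

lemma closure_squares_le {G : Type*} [Group G] (H : Subgroup G) :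
    Subgroup.closure {x | ∃ y ∈ H, x = y * y} ≤ H := by
  rw [Subgroup.closure_le]
  rintro x ⟨y, hy, rfl⟩
  exact mul_mem hy hy

lemma Lsq_le_Lgrp_inf_levelStab (ω : ℕ → Fin 3) (n : ℕ) :
    Lsq ω n ≤ Lgrp ω ⊓ levelStab n := by
  induction n with
  | zero => simp [Lsq, levelStab_zero]
  | succ n ih =>
    exact le_inf ((closure_squares_le _).trans (ih.trans inf_le_left))
      (closure_squares_le_levelStab_succ (ih.trans inf_le_right))

/-- `L_{n,ω} ≤ St_{L_ω}(n)`: every element of `L_{n,ω}` lies in `L_ω`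
and fixes every word of length `n`. -/
theorem statement8 (ω : ℕ → Fin 3) (n : ℕ) :
    ∀ g ∈ Lsq ω n, g ∈ Lgrp ω ∧ fixesLevel g n :=
  fun _ hg => Lsq_le_Lgrp_inf_levelStab ω n hg
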